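/- For φ, β ∈ ℝ and Σ_1, Σ_2 > 0, defining ν_{φ,β}(z, Σ_1, Σ_2) = (1/√(2πΣ_2)) ∫_{-∞}^{+∞} ν(φx + β, Σ_1) exp(-(x - z + Σ_2/2)^2/(2Σ_2)) dx, one has ν_{φ,β}(z, Σ_1, Σ_2) = ν(φz + β + ((φ^2 - φ)/2)Σ_2, Σ_1 + φ^2 Σ_2). -/

import Mathlib

open MeasureTheory

/-- Gaussian smoothing of the payoff `f` in log-coordinates. -/
noncomputable def nu (f : ℝ → ℝ) (z s : ℝ) : ℝ :=
  (Real.sqrt (2 * Real.pi * s))⁻¹ *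
    ∫ x : ℝ, f (Real.exp x) * Real.exp (-(x - z + s/2)^2 / (2*s))

/-!
`ν(z, Σ)` is the expectation of `f (exp X)` for `X ~ N(z - Σ/2, Σ)`. Hence the left-hand side is
the expectation of `f (exp (φ X + β + Y))` with independent `X ~ N(z - Σ₂/2, Σ₂)` and
`Y ~ N(-Σ₁/2, Σ₁)`, and `φ X + Y` is Gaussian with mean `φ (z - Σ₂/2) - Σ₁/2` and variance
`φ² Σ₂ + Σ₁`. Fubini is justified by the polynomial growth of `x ↦ f (exp x)`, which makes it
integrable against every Gaussian.
-/

open ProbabilityTheory NNReal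

lemma integrable_of_abs_le_mul_one_add_abs_pow {μ : Measure ℝ} [IsFiniteMeasure μ] {k : ℕ}
    (hμ : MemLp id k μ) {g : ℝ → ℝ} (hg : AEStronglyMeasurable g μ) {C : ℝ}
    (hbound : ∀ y, |g y| ≤ C * (1 + |y|) ^ k) : Integrable g μ := by
  have hone : MemLp (fun _ : ℝ ↦ (1 : ℝ)) k μ := memLp_const 1
  have habs : MemLp (fun y : ℝ ↦ |y|) k μ := hμ.abs
  have hpoly : Integrable (fun y ↦ ‖1 + |y|‖ ^ k) μ := (hone.add habs).integrable_norm_pow'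
  refine (hpoly.const_mul C).mono' hg (ae_of_all _ fun y ↦ ?_)
  rw [Real.norm_eq_abs, Real.norm_of_nonneg (by positivity)]
  exact hbound y

lemma integral_gaussianReal_sub_half_var {s : ℝ} (hs : 0 < s) (z : ℝ) (g : ℝ → ℝ) :
    ∫ x, g x ∂gaussianReal (z - s / 2) s.toNNReal
      = (Real.sqrt (2 * Real.pi * s))⁻¹ *
          ∫ x, g x * Real.exp (-(x - z + s / 2) ^ 2 / (2 * s)) := by
  rw [integral_gaussianReal_eq_integral_smul (by simpa using hs), ← integral_const_mul]
  congr 1 with x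
  rw [gaussianPDFReal, Real.coe_toNNReal _ hs.le, smul_eq_mul]
  ring_nf

lemma nu_eq_integral_gaussianReal (f : ℝ → ℝ) {s : ℝ} (hs : 0 < s) (z : ℝ) :
    nu f z s = ∫ x, f (Real.exp x) ∂gaussianReal (z - s / 2) s.toNNReal :=
  (integral_gaussianReal_sub_half_var hs z _).symm

lemma integral_integral_gaussianReal_affine_mean {E : Type*} [NormedAddCommGroup E]
    [NormedSpace ℝ E] {g : ℝ → E} (hg : StronglyMeasurable g) (φ c m : ℝ) (v₁ v₂ : ℝ≥0)
    (hint : Integrable g (gaussianReal (φ * m + c) ((φ ^ 2).toNNReal * v₂ + v₁))) :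
    ∫ x, ∫ y, g y ∂gaussianReal (φ * x + c) v₁ ∂gaussianReal m v₂
      = ∫ y, g y ∂gaussianReal (φ * m + c) ((φ ^ 2).toNNReal * v₂ + v₁) := by
  have hconv : gaussianReal (φ * m + c) ((φ ^ 2).toNNReal * v₂ + v₁)
      = (gaussianReal m v₂).map (φ * ·) ∗ gaussianReal c v₁ := by
    rw [gaussianReal_map_const_mul, gaussianReal_conv_gaussianReal]
    congr
    ext
    simp [sq_nonneg]
  have hinner : ∀ x, ∫ y, g y ∂gaussianReal (φ * x + c) v₁
      = ∫ y, g (φ * x + y) ∂gaussianReal c v₁ := by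
    intro x
    rw [add_comm, ← gaussianReal_map_const_add, integral_map (by fun_prop) hg.aestronglyMeasurable]
  have hmeas : StronglyMeasurable fun x ↦ ∫ y, g (x + y) ∂gaussianReal c v₁ :=
    (hg.comp_measurable measurable_add).integral_prod_right'
  rw [hconv] at hint ⊢
  rw [integral_conv hint, integral_map (by fun_prop) hmeas.aestronglyMeasurable]
  simp_rw [hinner]

/-- The affinely-transformed Gaussian smoothing `ν_{φ,β}` collapses to a single `ν`:
`ν_{φ,β}(z, Σ₁, Σ₂) = ν(φz + β + ((φ²-φ)/2)Σ₂, Σ₁ + φ²Σ₂)`. -/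
theorem nu_phi_beta (f : ℝ → ℝ) (hf : Measurable f)
    (hgrowth : ∃ C : ℝ, ∃ k : ℕ, ∀ x : ℝ, |f (Real.exp x)| ≤ C * (1 + |x|)^k)
    (φ β z s₁ s₂ : ℝ) (h1 : 0 < s₁) (h2 : 0 < s₂) :
    (Real.sqrt (2 * Real.pi * s₂))⁻¹ *
        (∫ x : ℝ, nu f (φ*x + β) s₁ * Real.exp (-(x - z + s₂/2)^2 / (2*s₂)))
      = nu f (φ*z + β + (φ^2 - φ)/2 * s₂) (s₁ + φ^2 * s₂) := by
  obtain ⟨C, k, hbound⟩ := hgrowth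
  have hmeas : Measurable fun x ↦ f (Real.exp x) := hf.comp Real.measurable_exp
  have hmean : φ * z + β + (φ ^ 2 - φ) / 2 * s₂ - (s₁ + φ ^ 2 * s₂) / 2
      = φ * (z - s₂ / 2) + (β - s₁ / 2) := by ring
  have hvar : (s₁ + φ ^ 2 * s₂).toNNReal = (φ ^ 2).toNNReal * s₂.toNNReal + s₁.toNNReal := by
    rw [← Real.toNNReal_mul (sq_nonneg φ), ← Real.toNNReal_add (by positivity) h1.le, add_comm]
  rw [← integral_gaussianReal_sub_half_var h2, nu_eq_integral_gaussianReal f (by positivity),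
    hmean, hvar]
  simp_rw [nu_eq_integral_gaussianReal f h1, add_sub_assoc]
  exact integral_integral_gaussianReal_affine_mean hmeas.stronglyMeasurable _ _ _ _ _
    (integrable_of_abs_le_mul_one_add_abs_pow (memLp_id_gaussianReal k)
      hmeas.aestronglyMeasurable hbound)
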